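/- Let (M, Q) be a measurable space with a probability measure Q, let d : M × M → [0,∞] be measurable and symmetric (d(p,q) = d(q,p)), and define the iterated kernels D_1 := d and D_{n+1}(p,q) := ∫_M D_n(p,r) d(r,q) Q(dr). Suppose p₀ ∈ M is an atom of Q, i.e. Q({p₀}) > 0 (with {p₀} measurable). Then the following are equivalent: (a) for Q-almost every q ∈ M there exists n ≥ 1 with D_n(p₀,q) > 0; (b) for Q⊗Q-almost every (p,q) ∈ M² there exists n ≥ 1 with D_n(p,q) > 0. -/

import Mathlib

open MeasureTheory
open scoped ENNReal

/-- Auxiliary iterated mark kernels: `DIterAux Q d k = D_{k+1}`, where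
`D_{n+1}(p,q) = ∫_M D_n(p,r) d(r,q) Q(dr)`. -/
noncomputable def DIterAux {M : Type*} [MeasurableSpace M] (Q : Measure M)
    (d : M → M → ℝ≥0∞) : ℕ → M → M → ℝ≥0∞
  | 0 => d
  | n + 1 => fun p q => ∫⁻ r, DIterAux Q d n p r * d r q ∂Q

/-- `DN Q d n = D_n` (meaningful for `n ≥ 1`): `D_1 = d`. -/
noncomputable def DN {M : Type*} [MeasurableSpace M] (Q : Measure M)
    (d : M → M → ℝ≥0∞) (n : ℕ) : M → M → ℝ≥0∞ :=
  DIterAux Q d (n - 1)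

/-!
By Chapman–Kolmogorov and symmetry,
`D_{m+n}(p,q) = ∫ D_m(p,r) D_n(r,q) Q(dr) ≥ D_m(p₀,p) D_n(p₀,q) Q{p₀}`, so positive paths from
the atom `p₀` to `p` and to `q` combine into one from `p` to `q`. Conversely, by Fubini the
product statement holds along `Q`-a.e. first coordinate, and a `Q`-null set cannot contain the
atom `p₀`.
-/

open Function

section KernelComposition

variable {M : Type*} [MeasurableSpace M] (Q : Measure M)

noncomputable def kernelComp (K L : M → M → ℝ≥0∞) (p q : M) : ℝ≥0∞ :=
  ∫⁻ r, K p r * L r q ∂Q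

variable [SFinite Q] {K L N : M → M → ℝ≥0∞}

theorem measurable_uncurry_kernelComp (hK : Measurable (uncurry K))
    (hL : Measurable (uncurry L)) : Measurable (uncurry (kernelComp Q K L)) := by
  have h : Measurable fun x : (M × M) × M => K x.1.1 x.2 * L x.2 x.1.2 := by
    fun_prop
  exact h.lintegral_prod_right'

theorem kernelComp_assoc (hK : Measurable (uncurry K)) (hL : Measurable (uncurry L))
    (hN : Measurable (uncurry N)) :
    kernelComp Q (kernelComp Q K L) N = kernelComp Q K (kernelComp Q L N) := by
  ext p q
  calc ∫⁻ r, (∫⁻ s, K p s * L s r ∂Q) * N r q ∂Q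
      = ∫⁻ r, ∫⁻ s, K p s * L s r * N r q ∂Q ∂Q := by
        refine lintegral_congr fun r => (lintegral_mul_const _ ?_).symm
        fun_prop
    _ = ∫⁻ s, ∫⁻ r, K p s * L s r * N r q ∂Q ∂Q := by
        refine lintegral_lintegral_swap (Measurable.aemeasurable ?_)
        fun_prop
    _ = ∫⁻ s, K p s * ∫⁻ r, L s r * N r q ∂Q ∂Q := by
        refine lintegral_congr fun s => ?_
        simp_rw [mul_assoc]
        exact lintegral_const_mul _ (by fun_prop)

end KernelComposition

section Iterates

variable {M : Type*} [MeasurableSpace M] (Q : Measure M) {d : M → M → ℝ≥0∞}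

theorem DIterAux_succ (n : ℕ) : DIterAux Q d (n + 1) = kernelComp Q (DIterAux Q d n) d := rfl

variable [SFinite Q]

theorem measurable_uncurry_DIterAux (hd : Measurable (uncurry d)) (n : ℕ) :
    Measurable (uncurry (DIterAux Q d n)) := by
  induction n with
  | zero => exact hd
  | succ n ih => exact measurable_uncurry_kernelComp Q ih hd

theorem DIterAux_add_add_one (hd : Measurable (uncurry d)) (a b : ℕ) :
    DIterAux Q d (a + b + 1) = kernelComp Q (DIterAux Q d a) (DIterAux Q d b) := by
  induction b with
  | zero => rfl
  | succ b ih =>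
    rw [← add_assoc, DIterAux_succ, ih, DIterAux_succ,
      kernelComp_assoc Q (measurable_uncurry_DIterAux Q hd a)
        (measurable_uncurry_DIterAux Q hd b) hd]

theorem DIterAux_comm (hd : Measurable (uncurry d)) (hsymm : ∀ p q, d p q = d q p) (n : ℕ)
    (p q : M) : DIterAux Q d n p q = DIterAux Q d n q p := by
  induction n generalizing p q with
  | zero => exact hsymm p q
  | succ n ih =>
    have hCK : DIterAux Q d (n + 1) = kernelComp Q d (DIterAux Q d n) := by
      have := DIterAux_add_add_one Q hd 0 n
      rwa [zero_add] at this
    calc DIterAux Q d (n + 1) p q = kernelComp Q (DIterAux Q d n) d p q := rfl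
      _ = kernelComp Q d (DIterAux Q d n) q p :=
        lintegral_congr fun r => by rw [ih, hsymm, mul_comm]
      _ = DIterAux Q d (n + 1) q p := by rw [hCK]

theorem DN_add (hd : Measurable (uncurry d)) {m n : ℕ} (hm : 1 ≤ m) (hn : 1 ≤ n) :
    DN Q d (m + n) = kernelComp Q (DN Q d m) (DN Q d n) := by
  obtain ⟨a, rfl⟩ := Nat.exists_eq_add_of_le' hm
  obtain ⟨b, rfl⟩ := Nat.exists_eq_add_of_le' hn
  simp only [DN, Nat.add_sub_cancel]
  rw [show a + 1 + (b + 1) - 1 = a + b + 1 by omega, DIterAux_add_add_one Q hd]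

end Iterates

theorem lintegral_pos_of_measure_singleton_pos {α : Type*} [MeasurableSpace α] {μ : Measure α}
    {f : α → ℝ≥0∞} (hf : Measurable f) {a : α} (hfa : 0 < f a) (ha : 0 < μ {a}) :
    0 < ∫⁻ x, f x ∂μ :=
  (lintegral_pos_iff_support hf).2 <|
    ha.trans_le (measure_mono (Set.singleton_subset_iff.2 hfa.ne'))

theorem Filter.Eventually.self_of_measure_singleton_ne_zero {α : Type*} [MeasurableSpace α]
    {μ : Measure α} {P : α → Prop} (h : ∀ᵐ x ∂μ, P x) {a : α} (ha : μ {a} ≠ 0) : P a := by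
  by_contra hPa
  exact ha (measure_mono_null (Set.singleton_subset_iff.2 hPa) (ae_iff.1 h))

theorem irreducibility_from_atom_general {M : Type*} [MeasurableSpace M]
    (Q : Measure M) [IsProbabilityMeasure Q]
    (d : M → M → ℝ≥0∞)
    (hmeas : Measurable fun pq : M × M => d pq.1 pq.2)
    (hsymm : ∀ p q, d p q = d q p)
    (p₀ : M) (hatom : 0 < Q {p₀}) :
    (∀ᵐ q ∂Q, ∃ n : ℕ, 1 ≤ n ∧ 0 < DN Q d n p₀ q) ↔
      (∀ᵐ pq ∂(Q.prod Q), ∃ n : ℕ, 1 ≤ n ∧ 0 < DN Q d n pq.1 pq.2) := by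
  have hd : Measurable (uncurry d) := hmeas
  constructor
  · intro H
    filter_upwards [Measure.quasiMeasurePreserving_fst.ae H,
      Measure.quasiMeasurePreserving_snd.ae H] with ⟨p, q⟩ ⟨m, hm, hp⟩ ⟨n, hn, hq⟩
    refine ⟨m + n, by omega, ?_⟩
    rw [DN_add Q hd hm hn]
    have hDN (k : ℕ) : Measurable (uncurry (DN Q d k)) := measurable_uncurry_DIterAux Q hd _
    refine lintegral_pos_of_measure_singleton_pos (by fun_prop) (ENNReal.mul_pos ?_ hq.ne') hatom
    rw [DN, DIterAux_comm Q hd hsymm]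
    exact hp.ne'
  · intro H
    exact (Measure.ae_ae_of_ae_prod H).self_of_measure_singleton_ne_zero hatom.ne'

/-- If `p₀` is an atom of `Q`, then positivity of some kernel iterate `D_n(p₀, q)` for
`Q`-a.e. `q` is equivalent to positivity of some `D_n(p,q)` for `Q⊗Q`-a.e. `(p,q)`. -/
theorem irreducibility_from_atom {M : Type*} [MeasurableSpace M]
    (Q : Measure M) [IsProbabilityMeasure Q]
    (d : M → M → ℝ≥0∞)
    (hmeas : Measurable fun pq : M × M => d pq.1 pq.2)
    (hsymm : ∀ p q, d p q = d q p)
    (p₀ : M) (hms : MeasurableSet ({p₀} : Set M)) (hatom : 0 < Q {p₀}) :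
    (∀ᵐ q ∂Q, ∃ n : ℕ, 1 ≤ n ∧ 0 < DN Q d n p₀ q) ↔
      (∀ᵐ pq ∂(Q.prod Q), ∃ n : ℕ, 1 ≤ n ∧ 0 < DN Q d n pq.1 pq.2) :=
  irreducibility_from_atom_general Q d hmeas hsymm p₀ hatom
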